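/- Assume the following spectral estimate of Kovrijkine type: there is a constant K > 1 (depending only on the dimension n) such that for every set ω ⊂ ℝ^n that is γ-thick at scale L (γ ∈ (0,1], L > 0), every λ ≥ 0, and every f ∈ L²(ℝ^n) whose Fourier transform is supported in the ball of radius √λ, one has ‖f‖_{L²(ℝ^n)} ≤ (K/γ)^{K(1+L√λ)}·‖f‖_{L²(ω)}. Then: if α ∈ (0,1) and ω ⊂ ℝ^n is α-exponentially thick, there exists c₁ > 0 such that for all λ > 0 and all f ∈ L²(ℝ^n) with Fourier support in the ball of radius √λ, ‖f‖_{L²(ℝ^n)} ≤ c₁·exp(c₁·λ^{α/2})·‖f‖_{L²(ω)}. -/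

import Mathlib

open MeasureTheory ENNReal

/-- `f` is band-limited with Fourier support in the closed ball of radius `R`: it is the
inverse Fourier transform of an integrable function supported in that ball. -/
def BandLimited (n : ℕ) (R : ℝ) (f : EuclideanSpace ℝ (Fin n) → ℂ) : Prop :=
  ∃ g : EuclideanSpace ℝ (Fin n) → ℂ, Integrable g ∧
    Function.support g ⊆ Metric.closedBall 0 R ∧ f = FourierTransformInv.fourierInv g

/-- The `L²` norm of `f` on the set `s`. -/
noncomputable def L2On (n : ℕ) (f : EuclideanSpace ℝ (Fin n) → ℂ)
    (s : Set (EuclideanSpace ℝ (Fin n))) : ℝ≥0∞ :=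
  eLpNorm (s.indicator f) 2 volume

/-
At scale `L = L₀ / (2√λ)` the set `ω` is `γ`-thick with `γ = min 1 (c exp(-C L^{-α}))`, and
`L√λ = L₀/2` is independent of `λ`. The Kovrijkine constant `(K/γ)^{K(1 + L√λ)}` is then at most
`A exp(B L^{-α}) = A exp(B' λ^{α/2})`. Small `λ` reduce to `λ = 1`, since band-limitation at
frequency `√λ` implies band-limitation at frequency `1`.
-/

open Real

theorem BandLimited.mono {n : ℕ} {R R' : ℝ} {f : EuclideanSpace ℝ (Fin n) → ℂ}
    (hf : BandLimited n R f) (hR : R ≤ R') : BandLimited n R' f := by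
  obtain ⟨g, hg, hsupp, rfl⟩ := hf
  exact ⟨g, hg, hsupp.trans (Metric.closedBall_subset_closedBall hR), rfl⟩

def IsThickAt {X : Type*} [PseudoMetricSpace X] [MeasureSpace X] (ω : Set X) (γ L : ℝ) : Prop :=
  ∀ x, ENNReal.ofReal γ * volume (Metric.ball x L) ≤ volume (ω ∩ Metric.ball x L)

theorem IsThickAt.mono {X : Type*} [PseudoMetricSpace X] [MeasureSpace X] {ω : Set X}
    {γ γ' L : ℝ} (h : IsThickAt ω γ L) (hγ : γ' ≤ γ) : IsThickAt ω γ' L :=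
  fun x => le_trans (by gcongr) (h x)

def KovrijkineEstimate (n : ℕ) (K : ℝ) : Prop :=
  ∀ γ L : ℝ, γ ∈ Set.Ioc (0 : ℝ) 1 → 0 < L →
    ∀ ω : Set (EuclideanSpace ℝ (Fin n)), MeasurableSet ω → IsThickAt ω γ L →
    ∀ lam : ℝ, 0 ≤ lam → ∀ f : EuclideanSpace ℝ (Fin n) → ℂ, MemLp f 2 volume →
      BandLimited n (√lam) f →
      L2On n f Set.univ ≤ ENNReal.ofReal ((K / γ) ^ (K * (1 + L * √lam))) * L2On n f ω

theorem inv_min_one_mul_exp_neg_le {c y : ℝ} (hy : 0 ≤ y) :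
    (min 1 (c * exp (-y)))⁻¹ ≤ max 1 c⁻¹ * exp y := by
  rcases min_cases 1 (c * exp (-y)) with ⟨h, -⟩ | ⟨h, -⟩ <;> rw [h]
  · simpa using one_le_mul_of_one_le_of_one_le (le_max_left 1 c⁻¹) (one_le_exp hy)
  · rw [mul_inv, ← exp_neg, neg_neg]
    gcongr
    exact le_max_right _ _

theorem div_min_one_mul_exp_neg_rpow_le {K c y E : ℝ} (hK : 0 ≤ K) (hc : 0 < c) (hy : 0 ≤ y)
    (hE : 0 ≤ E) :
    (K / min 1 (c * exp (-y))) ^ E ≤ (K * max 1 c⁻¹) ^ E * exp (E * y) := by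
  have hbase : K / min 1 (c * exp (-y)) ≤ K * max 1 c⁻¹ * exp y := by
    rw [div_eq_mul_inv, mul_assoc]
    exact mul_le_mul_of_nonneg_left (inv_min_one_mul_exp_neg_le hy) hK
  calc (K / min 1 (c * exp (-y))) ^ E ≤ (K * max 1 c⁻¹ * exp y) ^ E := by gcongr
    _ = (K * max 1 c⁻¹) ^ E * exp (E * y) := by
      rw [mul_rpow (by positivity) (exp_pos y).le, ← exp_mul, mul_comm y]

theorem div_sqrt_rpow_neg {a lam : ℝ} (ha : 0 < a) (hlam : 0 ≤ lam) (α : ℝ) :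
    (a / √lam) ^ (-α) = a⁻¹ ^ α * lam ^ (α / 2) := by
  rw [rpow_neg (by positivity), ← inv_rpow (by positivity), inv_div, div_eq_mul_inv,
    mul_rpow (by positivity) (by positivity), sqrt_eq_rpow, ← rpow_mul hlam]
  ring_nf

theorem KovrijkineEstimate.of_expThick {n : ℕ} {K : ℝ} (hKov : KovrijkineEstimate n K)
    (hK : 0 ≤ K) {α c C L₀ : ℝ} {ω : Set (EuclideanSpace ℝ (Fin n))} (hω : MeasurableSet ω)
    (hc : 0 < c) (hC : 0 ≤ C) (hL₀ : 0 < L₀)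
    (hthick : ∀ L : ℝ, 0 < L → L < L₀ → IsThickAt ω (c * exp (-C * L ^ (-α))) L)
    (lam : ℝ) (hlam : 1 ≤ lam) (f : EuclideanSpace ℝ (Fin n) → ℂ) (hf : MemLp f 2 volume)
    (hbl : BandLimited n (√lam) f) :
    L2On n f Set.univ ≤ ENNReal.ofReal ((K * max 1 c⁻¹) ^ (K * (1 + L₀ / 2)) *
      exp (K * (1 + L₀ / 2) * C * (L₀ / 2)⁻¹ ^ α * lam ^ (α / 2))) * L2On n f ω := by
  set L := L₀ / 2 / √lam
  have hsqrt : 1 ≤ √lam := one_le_sqrt.mpr hlam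
  have hL : 0 < L := by positivity
  have hLL₀ : L < L₀ := (div_le_self (by positivity) hsqrt).trans_lt (half_lt_self hL₀)
  have hscale : L * √lam = L₀ / 2 := div_mul_cancel₀ _ (by positivity)
  have hγ : min 1 (c * exp (-C * L ^ (-α))) ∈ Set.Ioc (0 : ℝ) 1 :=
    ⟨lt_min one_pos (by positivity), min_le_left _ _⟩
  refine (hKov _ L hγ hL ω hω ((hthick L hL hLL₀).mono (min_le_right _ _)) lam (by positivity)
    f hf hbl).trans ?_
  gcongr
  rw [hscale, neg_mul]
  refine (div_min_one_mul_exp_neg_rpow_le hK hc (by positivity) (by positivity)).trans_eq ?_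
  rw [div_sqrt_rpow_neg (by positivity) (by positivity)]
  ring_nf

theorem spectral_estimate_expThick_general (n : ℕ) (K : ℝ) (hK : 1 < K)
    (hKov : ∀ γ L : ℝ, γ ∈ Set.Ioc (0 : ℝ) 1 → 0 < L →
      ∀ ω : Set (EuclideanSpace ℝ (Fin n)), MeasurableSet ω →
      (∀ x : EuclideanSpace ℝ (Fin n),
        ENNReal.ofReal γ * volume (Metric.ball x L) ≤ volume (ω ∩ Metric.ball x L)) →
      ∀ lam : ℝ, 0 ≤ lam → ∀ f : EuclideanSpace ℝ (Fin n) → ℂ, MemLp f 2 volume →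
        BandLimited n (Real.sqrt lam) f →
        L2On n f Set.univ
          ≤ ENNReal.ofReal ((K / γ) ^ (K * (1 + L * Real.sqrt lam))) * L2On n f ω)
    (α : ℝ) (ω : Set (EuclideanSpace ℝ (Fin n)))
    (hω : MeasurableSet ω) (c C L₀ : ℝ) (hc : 0 < c) (hC : 0 < C) (hL₀ : 0 < L₀)
    (hthick : ∀ L : ℝ, 0 < L → L < L₀ → ∀ x : EuclideanSpace ℝ (Fin n),
      ENNReal.ofReal (c * Real.exp (-C * L ^ (-α))) * volume (Metric.ball x L)
        ≤ volume (ω ∩ Metric.ball x L)) :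
    ∃ c₁ > (0 : ℝ), ∀ lam : ℝ, 0 < lam → ∀ f : EuclideanSpace ℝ (Fin n) → ℂ,
      MemLp f 2 volume → BandLimited n (Real.sqrt lam) f →
      L2On n f Set.univ
        ≤ ENNReal.ofReal (c₁ * Real.exp (c₁ * lam ^ (α / 2))) * L2On n f ω := by
  have hK₀ : 0 ≤ K := by linarith
  have hlarge := KovrijkineEstimate.of_expThick (K := K) hKov hK₀ hω hc hC.le hL₀ hthick
  set A := (K * max 1 c⁻¹) ^ (K * (1 + L₀ / 2))
  set B := K * (1 + L₀ / 2) * C * (L₀ / 2)⁻¹ ^ α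
  have hA : 0 ≤ A := by positivity
  have hB : 0 ≤ B := by positivity
  have hAc₁ : A * exp B ≤ max (A * exp B) B := le_max_left _ _
  refine ⟨max (A * exp B) B, by positivity, fun lam _ f hf hbl => ?_⟩
  rcases le_or_gt 1 lam with h1 | h1
  · refine (hlarge lam h1 f hf hbl).trans ?_
    gcongr
    · exact (le_mul_of_one_le_right hA (one_le_exp hB)).trans hAc₁
    · exact le_max_right _ _
  · refine (hlarge 1 le_rfl f hf (hbl.mono (sqrt_le_sqrt h1.le))).trans ?_
    rw [Real.one_rpow, mul_one]
    gcongr ENNReal.ofReal ?_ * _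
    exact hAc₁.trans (le_mul_of_one_le_right (by positivity) (one_le_exp (by positivity)))

/-- Assuming the Kovrijkine-type spectral estimate for thick sets, every `α`-exponentially
thick set `ω ⊆ ℝⁿ` (with `α ∈ (0,1)`) satisfies the spectral estimate
`‖f‖_{L²(ℝⁿ)} ≤ c₁ exp(c₁ λ^{α/2}) ‖f‖_{L²(ω)}` for band-limited `f` at frequency `√λ`. -/
theorem spectral_estimate_expThick (n : ℕ) (K : ℝ) (hK : 1 < K)
    (hKov : ∀ γ L : ℝ, γ ∈ Set.Ioc (0 : ℝ) 1 → 0 < L →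
      ∀ ω : Set (EuclideanSpace ℝ (Fin n)), MeasurableSet ω →
      (∀ x : EuclideanSpace ℝ (Fin n),
        ENNReal.ofReal γ * volume (Metric.ball x L) ≤ volume (ω ∩ Metric.ball x L)) →
      ∀ lam : ℝ, 0 ≤ lam → ∀ f : EuclideanSpace ℝ (Fin n) → ℂ, MemLp f 2 volume →
        BandLimited n (Real.sqrt lam) f →
        L2On n f Set.univ
          ≤ ENNReal.ofReal ((K / γ) ^ (K * (1 + L * Real.sqrt lam))) * L2On n f ω)
    (α : ℝ) (hα : α ∈ Set.Ioo (0 : ℝ) 1) (ω : Set (EuclideanSpace ℝ (Fin n)))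
    (hω : MeasurableSet ω) (c C L₀ : ℝ) (hc : 0 < c) (hC : 0 < C) (hL₀ : 0 < L₀)
    (hthick : ∀ L : ℝ, 0 < L → L < L₀ → ∀ x : EuclideanSpace ℝ (Fin n),
      ENNReal.ofReal (c * Real.exp (-C * L ^ (-α))) * volume (Metric.ball x L)
        ≤ volume (ω ∩ Metric.ball x L)) :
    ∃ c₁ > (0 : ℝ), ∀ lam : ℝ, 0 < lam → ∀ f : EuclideanSpace ℝ (Fin n) → ℂ,
      MemLp f 2 volume → BandLimited n (Real.sqrt lam) f →
      L2On n f Set.univ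
        ≤ ENNReal.ofReal (c₁ * Real.exp (c₁ * lam ^ (α / 2))) * L2On n f ω :=
  spectral_estimate_expThick_general n K hK hKov α ω hω c C L₀ hc hC hL₀ hthick
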